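/- arXiv:2311.01027 — 4 statements merged into one kernel-verified Lean document; each statement's English description precedes it below -/
import Mathlib

section
/- Let δ > 0, θ ∈ (0,2], μ ≥ 0, κ > 0, and set ε₀ = min{(κ/(2(μ+κ)δθ))^{1/(2θ)}, 1}. Then for all r with 0 < r ≤ ε₀, the derivative of f(r) = sqrt((μ r^4 + κ r^2)/(1 + δ r^{2θ})) satisfies f'(r) ≥ κ / (2 (μ+κ)^{1/2} (1+δ)^{3/2}); in particular f'(r) > 0 and 1/f'(r) is bounded by a constant depending only on δ, θ, μ, κ. -/
/-!
By the quotient rule, `f' = (g' h - g h') / (2 √g · h^{3/2})` with `g = μ r⁴ + κ r²` and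
`h = 1 + δ r^{2θ}`. Since `h ≥ 1`, the term `g' h` is at least `g' ≥ 2κ r`, while the choice of
`ε₀` (which forces `r ≤ 1` and `r^{2θ} ≤ κ / (2(μ+κ)δθ)`) makes `g h' ≤ κ r`; so the numerator is
at least `κ r`. In the denominator, `√g ≤ r √(μ+κ)` and `h ≤ 1 + δ`, and the factors `r` cancel.
-/

open Real

theorem HasDerivAt.sqrt_div {g h : ℝ → ℝ} {g' h' x : ℝ} (hg : HasDerivAt g g' x)
    (hh : HasDerivAt h h' x) (hgx : 0 < g x) (hhx : 0 < h x) :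
    HasDerivAt (fun y => √(g y / h y))
      ((g' * h x - g x * h') / (2 * √(g x) * (h x * √(h x)))) x := by
  refine ((hg.div hh hhx.ne').sqrt (div_pos hgx hhx).ne').congr_deriv ?_
  rw [Pi.div_apply, sqrt_div' _ hhx.le]
  field_simp
  rw [sq_sqrt hhx.le]
  ring

section

variable {δ θ μ κ r : ℝ}

theorem quartic_mul_deriv_rpow_le (hδ : 0 < δ) (hθ : 0 < θ) (hμ : 0 ≤ μ) (hκ : 0 < κ)
    (hr : 0 < r) (hr1 : r ≤ 1) (hrθ : r ^ (2 * θ) ≤ κ / (2 * (μ + κ) * δ * θ)) :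
    (μ * r ^ 4 + κ * r ^ 2) * (δ * (2 * θ * r ^ (2 * θ - 1))) ≤ κ * r := by
  have hsplit : (μ * r ^ 4 + κ * r ^ 2) * (δ * (2 * θ * r ^ (2 * θ - 1)))
      = (μ * r ^ 2 + κ) * r ^ (2 * θ) * (2 * δ * θ * r) := by
    rw [← sub_add_cancel (2 * θ) 1, rpow_add_one hr.ne', sub_add_cancel]
    ring
  rw [hsplit]
  have hcoef : μ * r ^ 2 + κ ≤ μ + κ := by nlinarith [pow_le_one₀ hr.le hr1 (n := 2)]
  calc (μ * r ^ 2 + κ) * r ^ (2 * θ) * (2 * δ * θ * r)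
      ≤ (μ + κ) * (κ / (2 * (μ + κ) * δ * θ)) * (2 * δ * θ * r) := by gcongr
    _ = κ * r := by field_simp

theorem mul_le_quotient_numerator (hδ : 0 < δ) (hθ : 0 < θ) (hμ : 0 ≤ μ) (hκ : 0 < κ)
    (hr : 0 < r) (hr1 : r ≤ 1) (hrθ : r ^ (2 * θ) ≤ κ / (2 * (μ + κ) * δ * θ)) :
    κ * r ≤ (μ * (4 * r ^ 3) + κ * (2 * r)) * (1 + δ * r ^ (2 * θ))
      - (μ * r ^ 4 + κ * r ^ 2) * (δ * (2 * θ * r ^ (2 * θ - 1))) := by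
  have htail := quartic_mul_deriv_rpow_le hδ hθ hμ hκ hr hr1 hrθ
  have hgrowth : 0 ≤ (μ * (4 * r ^ 3) + κ * (2 * r)) * (δ * r ^ (2 * θ)) := by positivity
  nlinarith [mul_nonneg hμ (pow_pos hr 3).le]

theorem sqrt_quartic_le (hμ : 0 ≤ μ) (hr : 0 ≤ r) (hr1 : r ≤ 1) :
    √(μ * r ^ 4 + κ * r ^ 2) ≤ r * √(μ + κ) := by
  have hle : μ * r ^ 4 + κ * r ^ 2 ≤ (μ + κ) * r ^ 2 := by
    nlinarith [mul_nonneg hμ (sq_nonneg r), pow_le_one₀ hr hr1 (n := 2)]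
  calc √(μ * r ^ 4 + κ * r ^ 2) ≤ √((μ + κ) * r ^ 2) := sqrt_le_sqrt hle
    _ = r * √(μ + κ) := by rw [sqrt_mul' _ (sq_nonneg r), sqrt_sq hr, mul_comm]

theorem quotient_denominator_le (hδ : 0 ≤ δ) (hθ : 0 ≤ θ) (hμ : 0 ≤ μ) (hr : 0 ≤ r)
    (hr1 : r ≤ 1) :
    2 * √(μ * r ^ 4 + κ * r ^ 2) * ((1 + δ * r ^ (2 * θ)) * √(1 + δ * r ^ (2 * θ)))
      ≤ 2 * √(μ + κ) * ((1 + δ) * √(1 + δ)) * r := by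
  have hden : 1 + δ * r ^ (2 * θ) ≤ 1 + δ := by
    nlinarith [rpow_le_one hr hr1 (by positivity : 0 ≤ 2 * θ)]
  calc 2 * √(μ * r ^ 4 + κ * r ^ 2) * ((1 + δ * r ^ (2 * θ)) * √(1 + δ * r ^ (2 * θ)))
      ≤ 2 * (r * √(μ + κ)) * ((1 + δ) * √(1 + δ)) := by
        gcongr
        exact sqrt_quartic_le hμ hr hr1
    _ = 2 * √(μ + κ) * ((1 + δ) * √(1 + δ)) * r := by ring

end

theorem stmt4_general (δ θ μ κ : ℝ) (hδ : 0 < δ) (hθ : 0 < θ)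
    (hμ : 0 ≤ μ) (hκ : 0 < κ)
    (f : ℝ → ℝ)
    (hf : ∀ r : ℝ, f r = Real.sqrt ((μ * r ^ 4 + κ * r ^ 2) / (1 + δ * r ^ (2 * θ))))
    (ε₀ : ℝ) (hε₀ : ε₀ = min ((κ / (2 * (μ + κ) * δ * θ)) ^ (1 / (2 * θ))) 1)
    (r : ℝ) (hr : 0 < r) (hrε : r ≤ ε₀) :
    0 < deriv f r ∧
      κ / (2 * (μ + κ) ^ ((1 : ℝ) / 2) * (1 + δ) ^ ((3 : ℝ) / 2)) ≤ deriv f r := by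
  obtain ⟨hrC, hr1⟩ := le_min_iff.mp (hε₀ ▸ hrε)
  have hrθ : r ^ (2 * θ) ≤ κ / (2 * (μ + κ) * δ * θ) :=
    (le_rpow_inv_iff_of_pos hr.le (by positivity) (by positivity)).mp (one_div (2 * θ) ▸ hrC)
  have hg : HasDerivAt (fun x => μ * x ^ 4 + κ * x ^ 2) (μ * (4 * r ^ 3) + κ * (2 * r)) r := by
    simpa using ((hasDerivAt_pow 4 r).const_mul μ).fun_add ((hasDerivAt_pow 2 r).const_mul κ)
  have hh : HasDerivAt (fun x => 1 + δ * x ^ (2 * θ)) (δ * (2 * θ * r ^ (2 * θ - 1))) r :=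
    ((hasDerivAt_rpow_const (Or.inl hr.ne')).const_mul δ).const_add 1
  have hf' := funext hf ▸ hg.sqrt_div hh (show 0 < μ * r ^ 4 + κ * r ^ 2 by positivity)
    (show 0 < 1 + δ * r ^ (2 * θ) by positivity)
  have hnum := mul_le_quotient_numerator hδ hθ hμ hκ hr hr1 hrθ
  have hbound : κ / (2 * (μ + κ) ^ ((1 : ℝ) / 2) * (1 + δ) ^ ((3 : ℝ) / 2)) ≤ deriv f r := by
    rw [hf'.deriv, ← mul_div_mul_right κ _ hr.ne', ← sqrt_eq_rpow,
      show (3 : ℝ) / 2 = 1 + 1 / 2 by norm_num, rpow_add (by positivity), rpow_one,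
      ← sqrt_eq_rpow]
    exact div_le_div₀ ((by positivity : 0 ≤ κ * r).trans hnum) hnum (by positivity)
      (quotient_denominator_le hδ.le hθ.le hμ hr.le hr1)
  exact ⟨lt_of_lt_of_le (by positivity) hbound, hbound⟩

theorem stmt4 (δ θ μ κ : ℝ) (hδ : 0 < δ) (hθ : 0 < θ) (hθ2 : θ ≤ 2)
    (hμ : 0 ≤ μ) (hκ : 0 < κ)
    (f : ℝ → ℝ)
    (hf : ∀ r : ℝ, f r = Real.sqrt ((μ * r ^ 4 + κ * r ^ 2) / (1 + δ * r ^ (2 * θ))))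
    (ε₀ : ℝ) (hε₀ : ε₀ = min ((κ / (2 * (μ + κ) * δ * θ)) ^ (1 / (2 * θ))) 1)
    (r : ℝ) (hr : 0 < r) (hrε : r ≤ ε₀) :
    0 < deriv f r ∧
      κ / (2 * (μ + κ) ^ ((1 : ℝ) / 2) * (1 + δ) ^ ((3 : ℝ) / 2)) ≤ deriv f r :=
  stmt4_general δ θ μ κ hδ hθ hμ hκ f hf ε₀ hε₀ r hr hrε
end

section
/- Let δ > 0, θ ∈ (0,2], μ ≥ 0, κ > 0, and ε₀ = min{(κ/(2(μ+κ)δθ))^{1/(2θ)}, 1}. Then there exists a constant C > 0 depending only on δ, θ, μ, κ such that |f''(r)| ≤ C(1 + 1/r) for all 0 < r ≤ ε₀, where f(r) = sqrt((μ r^4 + κ r^2)/(1 + δ r^{2θ})). -/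
/-!
Write `f = √G` with `G = P / W`, `P r = μ r⁴ + κ r²` and `W r = 1 + δ r^(2θ)`. On `(0, 1]` the
weight satisfies `1 ≤ W ≤ 1 + δ` and the scale-invariant bounds `|r W'|, |r² W''| ≤ 2θ(2θ+1)δ`,
while `|P| ≲ r²`, `|P'| ≲ r`, `|P''| ≲ 1`; the quotient rule then gives `|G'| ≲ r` and
`|G''| ≲ 1`. Since `G ≥ κ r² / (1 + δ)`, both terms of
`(√G)'' = G'' / (2√G) - G'² / (4√G³)` are `O(1 / r)`.
-/

open Real Filter Topology

theorem deriv_deriv_sqrt_eq {G G' : ℝ → ℝ} {G'' r : ℝ}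
    (hG : ∀ᶠ y in 𝓝 r, HasDerivAt G (G' y) y) (hG' : HasDerivAt G' G'' r) (hpos : 0 < G r) :
    deriv (deriv fun y => √(G y)) r = G'' / (2 * √(G r)) - G' r ^ 2 / (4 * √(G r) ^ 3) := by
  have hpos_near : ∀ᶠ y in 𝓝 r, 0 < G y :=
    hG.self_of_nhds.continuousAt.eventually (lt_mem_nhds hpos)
  have hderiv : deriv (fun y => √(G y)) =ᶠ[𝓝 r] fun y => G' y / (2 * √(G y)) := by
    filter_upwards [hG, hpos_near] with y hy hy0
    exact (hy.sqrt hy0.ne').deriv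
  have hs : 0 < √(G r) := sqrt_pos.2 hpos
  rw [hderiv.deriv_eq]
  refine ((hG'.div ((hG.self_of_nhds.sqrt hpos.ne').const_mul 2) (by positivity)).congr_deriv
    ?_).deriv
  field_simp
  ring

theorem abs_sqrt_second_deriv_le {g g' g'' c r B D : ℝ} (hc : 0 < c) (hr : 0 < r)
    (hg : (c * r) ^ 2 ≤ g) (hg' : |g'| ≤ B * r) (hg'' : |g''| ≤ D) :
    |g'' / (2 * √g) - g' ^ 2 / (4 * √g ^ 3)| ≤ (D / (2 * c) + B ^ 2 / (4 * c ^ 3)) / r := by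
  have hcr : 0 < c * r := mul_pos hc hr
  have hs : c * r ≤ √g := le_sqrt_of_sq_le hg
  have hs0 : 0 < √g := hcr.trans_le hs
  have hsq : g' ^ 2 ≤ (B * r) ^ 2 := sq_le_sq' (abs_le.1 hg').1 (abs_le.1 hg').2
  calc |g'' / (2 * √g) - g' ^ 2 / (4 * √g ^ 3)|
      ≤ |g''| / (2 * √g) + g' ^ 2 / (4 * √g ^ 3) := by
        refine (abs_sub _ _).trans_eq ?_
        rw [abs_div, abs_div, abs_of_pos (by positivity : (0:ℝ) < 2 * √g),
          abs_of_pos (by positivity : (0:ℝ) < 4 * √g ^ 3), abs_sq]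
    _ ≤ D / (2 * (c * r)) + (B * r) ^ 2 / (4 * (c * r) ^ 3) := by
        gcongr
        exact (abs_nonneg _).trans hg''
    _ = (D / (2 * c) + B ^ 2 / (4 * c ^ 3)) / r := by
        field_simp

section Quotient

variable {p p' h h' : ℝ → ℝ} {p'' h'' x : ℝ}

theorem HasDerivAt.div_expand (hp : HasDerivAt p (p' x) x) (hh : HasDerivAt h (h' x) x)
    (hx : h x ≠ 0) :
    HasDerivAt (fun y => p y / h y) (p' x / h x - p x * h' x / h x ^ 2) x :=
  (hp.div hh hx).congr_deriv (by field_simp)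

theorem HasDerivAt.div_expand_deriv (hp : HasDerivAt p (p' x) x) (hp' : HasDerivAt p' p'' x)
    (hh : HasDerivAt h (h' x) x) (hh' : HasDerivAt h' h'' x) (hx : h x ≠ 0) :
    HasDerivAt (fun y => p' y / h y - p y * h' y / h y ^ 2)
      (p'' / h x - 2 * p' x * h' x / h x ^ 2 - p x * h'' / h x ^ 2
        + 2 * p x * h' x ^ 2 / h x ^ 3) x :=
  ((hp'.div hh hx).sub ((hp.mul hh').div (hh.pow 2) (pow_ne_zero 2 hx))).congr_deriv
    (by simp only [Pi.pow_apply, Pi.mul_apply]; field_simp; ring)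

end Quotient

section QuotientBounds

variable {p p' p'' h h' h'' r a b : ℝ}

theorem abs_div_pow_le_abs (hh : 1 ≤ h) (x : ℝ) (n : ℕ) : |x / h ^ n| ≤ |x| := by
  rw [abs_div, abs_of_pos (pow_pos (zero_lt_one.trans_le hh) n)]
  exact div_le_self (abs_nonneg x) (one_le_pow₀ hh)

theorem abs_div_deriv_le (hp : |p| ≤ a * r ^ 2) (hp' : |p'| ≤ a * r) (hh : 1 ≤ h)
    (hh' : |r * h'| ≤ b) :
    |p' / h - p * h' / h ^ 2| ≤ a * (1 + b) * r := by
  have har : 0 ≤ a * r := (abs_nonneg _).trans hp'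
  have h1 : |p' / h| ≤ a * r := by simpa using (abs_div_pow_le_abs hh p' 1).trans hp'
  have h2 : |p * h' / h ^ 2| ≤ a * r * b := calc
    |p * h' / h ^ 2| ≤ |p| * |h'| := by simpa [abs_mul] using abs_div_pow_le_abs hh (p * h') 2
    _ ≤ a * r ^ 2 * |h'| := by gcongr
    _ = a * r * (r * |h'|) := by ring
    _ ≤ a * r * |r * h'| := by rw [abs_mul]; gcongr; exact le_abs_self r
    _ ≤ a * r * b := by gcongr
  calc _ ≤ |p' / h| + |p * h' / h ^ 2| := abs_sub _ _
    _ ≤ a * r + a * r * b := add_le_add h1 h2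
    _ = a * (1 + b) * r := by ring

theorem abs_div_second_deriv_le (hp : |p| ≤ a * r ^ 2) (hp' : |p'| ≤ a * r) (hp'' : |p''| ≤ a)
    (hh : 1 ≤ h) (hh' : |r * h'| ≤ b) (hh'' : |r ^ 2 * h''| ≤ b) :
    |p'' / h - 2 * p' * h' / h ^ 2 - p * h'' / h ^ 2 + 2 * p * h' ^ 2 / h ^ 3|
      ≤ a * (1 + b) * (1 + 2 * b) := by
  have ha : 0 ≤ a := (abs_nonneg _).trans hp''
  have h1 : |p'' / h| ≤ a := by simpa using (abs_div_pow_le_abs hh p'' 1).trans hp''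
  have h2 : |2 * p' * h' / h ^ 2| ≤ 2 * (a * b) := calc
    |2 * p' * h' / h ^ 2| ≤ 2 * (|p'| * |h'|) := by
      simpa [abs_mul, mul_assoc] using abs_div_pow_le_abs hh (2 * p' * h') 2
    _ ≤ 2 * (a * r * |h'|) := by gcongr
    _ ≤ 2 * (a * |r * h'|) := by rw [abs_mul, mul_assoc]; gcongr; exact le_abs_self r
    _ ≤ 2 * (a * b) := by gcongr
  have h3 : |p * h'' / h ^ 2| ≤ a * b := calc
    |p * h'' / h ^ 2| ≤ |p| * |h''| := by simpa [abs_mul] using abs_div_pow_le_abs hh (p * h'') 2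
    _ ≤ a * r ^ 2 * |h''| := by gcongr
    _ = a * |r ^ 2 * h''| := by rw [abs_mul, abs_of_nonneg (sq_nonneg r)]; ring
    _ ≤ a * b := by gcongr
  have h4 : |2 * p * h' ^ 2 / h ^ 3| ≤ 2 * (a * b ^ 2) := calc
    |2 * p * h' ^ 2 / h ^ 3| ≤ 2 * (|p| * h' ^ 2) :=
      (abs_div_pow_le_abs hh _ 3).trans_eq (by simp [abs_mul, mul_assoc])
    _ ≤ 2 * (a * r ^ 2 * h' ^ 2) := by gcongr
    _ = 2 * (a * |r * h'| ^ 2) := by rw [sq_abs]; ring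
    _ ≤ 2 * (a * b ^ 2) := by gcongr
  calc _ ≤ |p'' / h| + |2 * p' * h' / h ^ 2| + |p * h'' / h ^ 2| + |2 * p * h' ^ 2 / h ^ 3| :=
        (abs_add_le _ _).trans (add_le_add_left ((abs_sub _ _).trans
          (add_le_add_left (abs_sub _ _) _)) _)
    _ ≤ a + 2 * (a * b) + a * b + 2 * (a * b ^ 2) := by gcongr
    _ = a * (1 + b) * (1 + 2 * b) := by ring

end QuotientBounds

section Profile

variable (δ θ μ κ : ℝ)

def quartic (y : ℝ) : ℝ := μ * y ^ 4 + κ * y ^ 2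

def quarticDeriv (y : ℝ) : ℝ := 4 * μ * y ^ 3 + 2 * κ * y

noncomputable def weight (y : ℝ) : ℝ := 1 + δ * y ^ (2 * θ)

noncomputable def weightDeriv (y : ℝ) : ℝ := 2 * θ * δ * y ^ (2 * θ - 1)

variable {δ θ μ κ} {x r : ℝ}

theorem hasDerivAt_quartic : HasDerivAt (quartic μ κ) (quarticDeriv μ κ x) x :=
  (((hasDerivAt_pow 4 x).const_mul μ).add ((hasDerivAt_pow 2 x).const_mul κ)).congr_deriv
    (by unfold quarticDeriv; push_cast; ring)

theorem hasDerivAt_quarticDeriv :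
    HasDerivAt (quarticDeriv μ κ) (12 * μ * x ^ 2 + 2 * κ) x :=
  (((hasDerivAt_pow 3 x).const_mul (4 * μ)).add
    ((hasDerivAt_id x).const_mul (2 * κ))).congr_deriv (by push_cast; ring)

theorem hasDerivAt_weight (hx : x ≠ 0) : HasDerivAt (weight δ θ) (weightDeriv δ θ x) x :=
  (((hasDerivAt_rpow_const (Or.inl hx)).const_mul δ).const_add 1).congr_deriv
    (by unfold weightDeriv; ring)

theorem hasDerivAt_weightDeriv (hx : x ≠ 0) :
    HasDerivAt (weightDeriv δ θ) (2 * θ * (2 * θ - 1) * δ * x ^ (2 * θ - 2)) x :=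
  ((hasDerivAt_rpow_const (Or.inl hx)).const_mul (2 * θ * δ)).congr_deriv
    (by rw [show 2 * θ - 1 - 1 = 2 * θ - 2 by ring]; ring)

theorem quartic_bounds (hμ : 0 ≤ μ) (hκ : 0 ≤ κ) (hr : 0 ≤ r) (hr1 : r ≤ 1) :
    |quartic μ κ r| ≤ 12 * (μ + κ) * r ^ 2 ∧
      |quarticDeriv μ κ r| ≤ 12 * (μ + κ) * r ∧
      |12 * μ * r ^ 2 + 2 * κ| ≤ 12 * (μ + κ) := by
  have hr2 : r ^ 2 ≤ 1 := pow_le_one₀ hr hr1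
  unfold quartic quarticDeriv
  refine ⟨?_, ?_, ?_⟩ <;> rw [abs_of_nonneg (by positivity)]
  · nlinarith [mul_le_mul_of_nonneg_left hr2 (mul_nonneg hμ (sq_nonneg r))]
  · nlinarith [mul_le_mul_of_nonneg_left hr2 (mul_nonneg hμ hr)]
  · nlinarith [mul_le_mul_of_nonneg_left hr2 hμ]

theorem weight_bounds (hδ : 0 ≤ δ) (hθ : 0 < θ) (hr : 0 < r) (hr1 : r ≤ 1) :
    1 ≤ weight δ θ r ∧ weight δ θ r ≤ 1 + δ ∧
      |r * weightDeriv δ θ r| ≤ 2 * θ * (2 * θ + 1) * δ ∧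
      |r ^ 2 * (2 * θ * (2 * θ - 1) * δ * r ^ (2 * θ - 2))| ≤ 2 * θ * (2 * θ + 1) * δ := by
  have hv0 : 0 ≤ r ^ (2 * θ) := rpow_nonneg hr.le _
  have hv1 : r ^ (2 * θ) ≤ 1 := rpow_le_one hr.le hr1 (by linarith)
  have hdθ : 0 ≤ 2 * θ * δ := by positivity
  have e1 : r * weightDeriv δ θ r = 2 * θ * δ * r ^ (2 * θ) := by
    rw [weightDeriv, rpow_sub_one hr.ne']; field_simp
  have e2 : r ^ 2 * (2 * θ * (2 * θ - 1) * δ * r ^ (2 * θ - 2))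
      = (2 * θ - 1) * (2 * θ * δ * r ^ (2 * θ)) := by
    rw [rpow_sub hr, rpow_two]; field_simp
  have hv : 2 * θ * δ * r ^ (2 * θ) ≤ 2 * θ * δ := mul_le_of_le_one_right hdθ hv1
  refine ⟨by unfold weight; nlinarith, by unfold weight; nlinarith, ?_, ?_⟩
  · rw [e1, abs_of_nonneg (by positivity)]
    nlinarith
  · rw [e2, abs_mul, abs_of_nonneg (by positivity : 0 ≤ 2 * θ * δ * r ^ (2 * θ))]
    have : |2 * θ - 1| ≤ 2 * θ + 1 := abs_le.2 ⟨by linarith, by linarith⟩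
    nlinarith [abs_nonneg (2 * θ - 1)]

end Profile

theorem stmt5_general (δ θ μ κ : ℝ) (hδ : 0 < δ) (hθ : 0 < θ)
    (hμ : 0 ≤ μ) (hκ : 0 < κ)
    (f : ℝ → ℝ)
    (hf : ∀ r : ℝ, f r = Real.sqrt ((μ * r ^ 4 + κ * r ^ 2) / (1 + δ * r ^ (2 * θ))))
    (ε₀ : ℝ) (hε₀ : ε₀ = min ((κ / (2 * (μ + κ) * δ * θ)) ^ (1 / (2 * θ))) 1) :
    ∃ C : ℝ, 0 < C ∧ ∀ r : ℝ, 0 < r → r ≤ ε₀ →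
      |deriv (deriv f) r| ≤ C * (1 + 1 / r) := by
  set a := 12 * (μ + κ)
  set b := 2 * θ * (2 * θ + 1) * δ
  set c := √(κ / (1 + δ))
  set K := a * (1 + b) * (1 + 2 * b) / (2 * c) + (a * (1 + b)) ^ 2 / (4 * c ^ 3)
  have hc : 0 < c := sqrt_pos.2 (by positivity)
  refine ⟨K + 1, by positivity, fun r hr hrε => ?_⟩
  have hr1 : r ≤ 1 := hrε.trans (hε₀ ▸ min_le_right _ _)
  obtain ⟨hp, hp', hp''⟩ := quartic_bounds hμ hκ.le hr.le hr1
  obtain ⟨hh, hhδ, hh', hh''⟩ := weight_bounds hδ.le hθ hr hr1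
  have hlow : (c * r) ^ 2 ≤ quartic μ κ r / weight δ θ r := by
    rw [mul_pow, sq_sqrt (by positivity), div_mul_eq_mul_div]
    exact div_le_div₀ (by unfold quartic; positivity)
      (by unfold quartic; nlinarith [pow_nonneg hr.le 4]) (by linarith) hhδ
  have hG : ∀ᶠ y in 𝓝 r, HasDerivAt (fun y => quartic μ κ y / weight δ θ y)
      (quarticDeriv μ κ y / weight δ θ y
        - quartic μ κ y * weightDeriv δ θ y / weight δ θ y ^ 2) y := by
    filter_upwards [lt_mem_nhds hr] with y hy
    exact hasDerivAt_quartic.div_expand (hasDerivAt_weight hy.ne')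
      (by unfold weight; have := rpow_nonneg hy.le (2 * θ); positivity)
  have hf' : f = fun y => √(quartic μ κ y / weight δ θ y) := funext hf
  rw [hf', deriv_deriv_sqrt_eq hG (hasDerivAt_quartic.div_expand_deriv hasDerivAt_quarticDeriv
    (hasDerivAt_weight hr.ne') (hasDerivAt_weightDeriv hr.ne') (by linarith))
    ((by positivity : 0 < (c * r) ^ 2).trans_le hlow)]
  calc _ ≤ K / r := abs_sqrt_second_deriv_le hc hr hlow (abs_div_deriv_le hp hp' hh hh')
        (abs_div_second_deriv_le hp hp' hp'' hh hh' hh'')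
    _ ≤ (K + 1) * (1 + 1 / r) := by
        have hK : 0 ≤ K := by positivity
        rw [div_eq_mul_one_div]
        nlinarith [one_div_pos.2 hr]

theorem stmt5 (δ θ μ κ : ℝ) (hδ : 0 < δ) (hθ : 0 < θ) (hθ2 : θ ≤ 2)
    (hμ : 0 ≤ μ) (hκ : 0 < κ)
    (f : ℝ → ℝ)
    (hf : ∀ r : ℝ, f r = Real.sqrt ((μ * r ^ 4 + κ * r ^ 2) / (1 + δ * r ^ (2 * θ))))
    (ε₀ : ℝ) (hε₀ : ε₀ = min ((κ / (2 * (μ + κ) * δ * θ)) ^ (1 / (2 * θ))) 1) :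
    ∃ C : ℝ, 0 < C ∧ ∀ r : ℝ, 0 < r → r ≤ ε₀ →
      |deriv (deriv f) r| ≤ C * (1 + 1 / r) :=
  stmt5_general δ θ μ κ hδ hθ hμ hκ f hf ε₀ hε₀
end

section
/- Let n = 1, and assume u₀ ∈ L²(ℝ), u₁ ∈ L^{1,γ}(ℝ) with γ ∈ (1/2,1] and P = ∫_ℝ u₁(x)dx ≠ 0. Then the solution u of u_tt + δ(−Δ)^θ u_tt + μΔ²u − κΔu = 0 with data (u₀, u₁) satisfies ‖u(t,·)‖²_{L²(ℝ)} ≥ C P² t for t sufficiently large, for some constant C > 0. -/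
/-!
On the band `ξ ∈ [ε/2t, ε/t]` the symbol satisfies `t f(ξ) ≤ 1`, because `f(ξ) = O(ξ)` at `0`;
hence `sin (t f) / f ≥ (2/π) t` there. Since `û₁` is continuous with `û₁ 0 = P`, it stays above
`|P|/2` on the band for large `t`, while `cos (t f) û₀` is bounded by `‖u₀‖₁`. So `|ŵ(t, ξ)| ≳ t |P|`
on a band of length `ε/2t`, and integrating gives `∫ |ŵ(t, ξ)|² dξ ≳ P² t`.
-/

open MeasureTheory Real Set Filter Topology

noncomputable def angularFourier (u : ℝ → ℝ) (ξ : ℝ) : ℂ :=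
  ∫ x : ℝ, Complex.exp (-(Complex.I * x * ξ)) * (u x : ℂ)

lemma norm_exp_neg_I_mul_mul (x ξ : ℝ) : ‖Complex.exp (-(Complex.I * x * ξ))‖ = 1 := by
  rw [Complex.norm_exp]; simp

-- No integrability is needed: both integrals are `0` when `u` is not integrable.
lemma norm_angularFourier_le (u : ℝ → ℝ) (ξ : ℝ) : ‖angularFourier u ξ‖ ≤ ∫ x, |u x| :=
  (norm_integral_le_integral_norm _).trans_eq <| by
    simp only [norm_mul, norm_exp_neg_I_mul_mul, one_mul, Complex.norm_real, Real.norm_eq_abs]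

lemma continuous_angularFourier {u : ℝ → ℝ} (hu : Integrable u) :
    Continuous (angularFourier u) :=
  continuous_of_dominated (bound := fun x => ‖u x‖)
    (fun ξ => (by fun_prop : Continuous fun x : ℝ => Complex.exp (-(Complex.I * x * ξ)))
      |>.aestronglyMeasurable.mul
        (Complex.continuous_ofReal.comp_aestronglyMeasurable hu.aestronglyMeasurable))
    (fun ξ => ae_of_all _ fun x => by
      rw [norm_mul, norm_exp_neg_I_mul_mul, one_mul, Complex.norm_real])
    hu.norm (ae_of_all _ fun x => by fun_prop)

lemma eventually_lt_norm_angularFourier {u : ℝ → ℝ} (hu : Integrable u) {c : ℝ}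
    (hc : c < |∫ x, u x|) : ∀ᶠ ξ in 𝓝 0, c < ‖angularFourier u ξ‖ := by
  have h0 : ‖angularFourier u 0‖ = |∫ x, u x| := by
    simp [angularFourier, integral_complex_ofReal]
  rw [← h0] at hc
  exact (continuous_angularFourier hu).norm.continuousAt.eventually (lt_mem_nhds hc)

noncomputable def dispersion (δ θ μ κ r : ℝ) : ℝ :=
  √((μ * r ^ 4 + κ * r ^ 2) / (1 + δ * r ^ (2 * θ)))

section dispersion

variable {δ θ μ κ r : ℝ}

lemma one_le_one_add_mul_rpow (hδ : 0 ≤ δ) (hr : 0 ≤ r) : 1 ≤ 1 + δ * r ^ (2 * θ) :=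
  le_add_of_nonneg_right (mul_nonneg hδ (rpow_nonneg hr _))

lemma dispersion_pos (hδ : 0 ≤ δ) (hμ : 0 ≤ μ) (hκ : 0 < κ) (hr : 0 < r) :
    0 < dispersion δ θ μ κ r :=
  sqrt_pos.2 <| div_pos (by positivity)
    (one_pos.trans_le (one_le_one_add_mul_rpow hδ hr.le))

lemma dispersion_le (hδ : 0 ≤ δ) (hμ : 0 ≤ μ) (hκ : 0 ≤ κ) (hr : 0 ≤ r) (hr1 : r ≤ 1) :
    dispersion δ θ μ κ r ≤ √(μ + κ) * r := by
  have hnum : μ * r ^ 4 + κ * r ^ 2 ≤ (μ + κ) * r ^ 2 := by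
    have : r ^ 4 ≤ r ^ 2 := pow_le_pow_of_le_one hr hr1 (by norm_num)
    nlinarith
  calc dispersion δ θ μ κ r ≤ √((μ + κ) * r ^ 2) :=
        sqrt_le_sqrt <| (div_le_self (by positivity) (one_le_one_add_mul_rpow hδ hr)).trans hnum
    _ = √(μ + κ) * r := by rw [sqrt_mul' _ (sq_nonneg r), sqrt_sq hr]

lemma mul_dispersion_le_one (hδ : 0 ≤ δ) (hμ : 0 ≤ μ) (hκ : 0 ≤ κ) {t : ℝ} (ht : 0 ≤ t)
    (hr : 0 ≤ r) (hr1 : r ≤ 1) (htr : t * r ≤ 1 / (√(μ + κ) + 1)) :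
    t * dispersion δ θ μ κ r ≤ 1 :=
  calc t * dispersion δ θ μ κ r ≤ √(μ + κ) * (t * r) := by
        rw [mul_left_comm]; gcongr; exact dispersion_le hδ hμ hκ hr hr1
    _ ≤ √(μ + κ) * (1 / (√(μ + κ) + 1)) := by gcongr
    _ ≤ 1 := by rw [mul_one_div, div_le_one (by positivity)]; linarith

end dispersion

lemma mul_norm_sub_norm_le_norm_cos_add_sin_div {s y : ℝ} (A B : ℂ) (hy : 0 < y) (hs : 0 ≤ s)
    (hsy : s * y ≤ π / 2) :
    2 / π * s * ‖B‖ - ‖A‖ ≤ ‖(cos (s * y) : ℂ) * A + ((sin (s * y) / y : ℝ) : ℂ) * B‖ := by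
  have hsin : 2 / π * s ≤ sin (s * y) / y := by
    rw [le_div_iff₀ hy, mul_assoc]; exact mul_le_sin (by positivity) hsy
  have hA : ‖(cos (s * y) : ℂ) * A‖ ≤ ‖A‖ := by
    rw [norm_mul, Complex.norm_real, norm_eq_abs]
    exact mul_le_of_le_one_left (norm_nonneg _) (abs_cos_le_one _)
  have hB : 2 / π * s * ‖B‖ ≤ ‖((sin (s * y) / y : ℝ) : ℂ) * B‖ := by
    rw [norm_mul, Complex.norm_real, norm_eq_abs]
    exact mul_le_mul_of_nonneg_right (hsin.trans (le_abs_self _)) (norm_nonneg _)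
  rw [add_comm]
  linarith [norm_sub_le_norm_add (((sin (s * y) / y : ℝ) : ℂ) * B) ((cos (s * y) : ℂ) * A)]

noncomputable def fourierSolution (δ θ μ κ : ℝ) (u₀ u₁ : ℝ → ℝ) (t ξ : ℝ) : ℂ :=
  (cos (t * dispersion δ θ μ κ |ξ|) : ℂ) * angularFourier u₀ ξ
    + ((sin (t * dispersion δ θ μ κ |ξ|) / dispersion δ θ μ κ |ξ| : ℝ) : ℂ) * angularFourier u₁ ξ

lemma sub_le_norm_fourierSolution {δ θ μ κ : ℝ} (hδ : 0 ≤ δ) (hμ : 0 ≤ μ) (hκ : 0 < κ)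
    (u₀ u₁ : ℝ → ℝ) {t ξ a : ℝ} (ht : 0 ≤ t) (hξ : 0 < ξ) (hξ1 : ξ ≤ 1)
    (htξ : t * ξ ≤ 1 / (√(μ + κ) + 1)) (ha : a ≤ ‖angularFourier u₁ ξ‖) :
    2 / π * t * a - ∫ x, |u₀ x| ≤ ‖fourierSolution δ θ μ κ u₀ u₁ t ξ‖ := by
  have htf : t * dispersion δ θ μ κ ξ ≤ π / 2 :=
    (mul_dispersion_le_one hδ hμ hκ.le ht hξ.le hξ1 htξ).trans one_le_pi_div_two
  rw [fourierSolution, abs_of_pos hξ]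
  calc 2 / π * t * a - ∫ x, |u₀ x|
      ≤ 2 / π * t * ‖angularFourier u₁ ξ‖ - ‖angularFourier u₀ ξ‖ := by
        gcongr; exact norm_angularFourier_le u₀ ξ
    _ ≤ _ := mul_norm_sub_norm_le_norm_cos_add_sin_div _ _ (dispersion_pos hδ hμ hκ hξ) ht htf

lemma ofReal_mul_sub_le_lintegral {g : ℝ → ℝ} {a b c : ℝ} (hc : 0 ≤ c)
    (h : ∀ x ∈ Icc a b, c ≤ g x) : ENNReal.ofReal (c * (b - a)) ≤ ∫⁻ x, ENNReal.ofReal (g x) :=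
  calc ENNReal.ofReal (c * (b - a)) = ∫⁻ _ in Icc a b, ENNReal.ofReal c := by
        rw [setLIntegral_const, volume_Icc, ENNReal.ofReal_mul hc]
    _ ≤ ∫⁻ x in Icc a b, ENNReal.ofReal (g x) :=
        setLIntegral_mono' measurableSet_Icc fun x hx => ENNReal.ofReal_le_ofReal (h x hx)
    _ ≤ ∫⁻ x, ENNReal.ofReal (g x) := setLIntegral_le_lintegral _ _

theorem stmt10_general (δ θ μ κ : ℝ) (hδ : 0 < δ)
    (hμ : 0 ≤ μ) (hκ : 0 < κ)
    (u₀ u₁ : ℝ → ℝ)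
    (P : ℝ) (hP : P = ∫ x, u₁ x) (hP0 : P ≠ 0)
    (f : ℝ → ℝ)
    (hf : ∀ r : ℝ, f r = Real.sqrt ((μ * r ^ 4 + κ * r ^ 2) / (1 + δ * r ^ (2 * θ))))
    (w : ℝ → ℝ → ℂ)
    (hw : ∀ t ξ : ℝ, w t ξ =
        (Real.cos (t * f |ξ|) : ℂ) * (∫ x : ℝ, Complex.exp (-(Complex.I * x * ξ)) * (u₀ x : ℂ))
      + ((Real.sin (t * f |ξ|) / f |ξ| : ℝ) : ℂ)
          * (∫ x : ℝ, Complex.exp (-(Complex.I * x * ξ)) * (u₁ x : ℂ))) :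
    ∃ C : ℝ, 0 < C ∧ ∃ T : ℝ, ∀ t ≥ T,
      ENNReal.ofReal (C * P ^ 2 * t)
        ≤ ∫⁻ ξ : ℝ, ENNReal.ofReal (‖w t ξ‖ ^ 2) := by
  obtain rfl : f = dispersion δ θ μ κ := funext hf
  obtain rfl : w = fourierSolution δ θ μ κ u₀ u₁ := funext fun t => funext (hw t)
  have hu₁ : Integrable u₁ := by
    by_contra h
    exact hP0 (hP.trans (integral_undef h))
  have hP' : 0 < |P| := abs_pos.2 hP0
  obtain ⟨ρ, hρ, hnear⟩ := Metric.eventually_nhds_iff.1 <|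
    (eventually_lt_norm_angularFourier hu₁ (hP ▸ half_lt_self hP')).and (eventually_lt_nhds one_pos)
  set ε := 1 / (√(μ + κ) + 1)
  set M := ∫ x, |u₀ x|
  refine ⟨ε / (8 * π ^ 2), by positivity, eventually_atTop.1 ?_⟩
  filter_upwards [eventually_gt_atTop 0, eventually_ge_atTop (2 * π * M / |P|),
    (tendsto_const_nhds (x := ε)).div_atTop tendsto_id |>.eventually (gt_mem_nhds hρ)]
    with t ht htM htρ
  rw [div_le_iff₀ hP'] at htM
  have hband : ∀ ξ ∈ Icc (ε / (2 * t)) (ε / t),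
      (t * |P| / (2 * π)) ^ 2 ≤ ‖fourierSolution δ θ μ κ u₀ u₁ t ξ‖ ^ 2 := by
    rintro ξ ⟨hlo, hhi⟩
    have hξ : 0 < ξ := (by positivity : 0 < ε / (2 * t)).trans_le hlo
    obtain ⟨hu₁ξ, hξ1⟩ := hnear (show dist ξ 0 < ρ by
      rw [Real.dist_0_eq_abs, abs_of_pos hξ]; exact hhi.trans_lt htρ)
    gcongr
    calc t * |P| / (2 * π) ≤ 2 / π * t * (|P| / 2) - M := by field_simp; linarith
      _ ≤ _ := sub_le_norm_fourierSolution hδ.le hμ hκ u₀ u₁ ht.le hξ hξ1.le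
          (by rwa [le_div_iff₀ ht, mul_comm] at hhi) (hP ▸ hu₁ξ).le
  calc ENNReal.ofReal (ε / (8 * π ^ 2) * P ^ 2 * t)
      = ENNReal.ofReal ((t * |P| / (2 * π)) ^ 2 * (ε / t - ε / (2 * t))) := by
        congr 1; field_simp; rw [sq_abs]; ring
    _ ≤ _ := ofReal_mul_sub_le_lintegral (by positivity) hband

theorem stmt10 (δ θ μ κ γ : ℝ) (hδ : 0 < δ) (hθ : 0 < θ) (hθ2 : θ ≤ 2)
    (hμ : 0 ≤ μ) (hκ : 0 < κ) (hγ : 1 / 2 < γ) (hγ1 : γ ≤ 1)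
    (u₀ u₁ : ℝ → ℝ) (hu₀ : MemLp u₀ 2 volume)
    (hu₁ : Integrable (fun x => (1 + |x| ^ γ) * |u₁ x|))
    (P : ℝ) (hP : P = ∫ x, u₁ x) (hP0 : P ≠ 0)
    (f : ℝ → ℝ)
    (hf : ∀ r : ℝ, f r = Real.sqrt ((μ * r ^ 4 + κ * r ^ 2) / (1 + δ * r ^ (2 * θ))))
    (w : ℝ → ℝ → ℂ)
    (hw : ∀ t ξ : ℝ, w t ξ =
        (Real.cos (t * f |ξ|) : ℂ) * (∫ x : ℝ, Complex.exp (-(Complex.I * x * ξ)) * (u₀ x : ℂ))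
      + ((Real.sin (t * f |ξ|) / f |ξ| : ℝ) : ℂ)
          * (∫ x : ℝ, Complex.exp (-(Complex.I * x * ξ)) * (u₁ x : ℂ))) :
    ∃ C : ℝ, 0 < C ∧ ∃ T : ℝ, ∀ t ≥ T,
      ENNReal.ofReal (C * P ^ 2 * t)
        ≤ ∫⁻ ξ : ℝ, ENNReal.ofReal (‖w t ξ‖ ^ 2) :=
  stmt10_general δ θ μ κ hδ hμ hκ u₀ u₁ P hP hP0 f hf w hw
end

section
/- Let δ > 0, θ ∈ (0,2], μ ≥ 0, κ > 0, ε₀ as above, and f(r) = sqrt((μr⁴+κr²)/(1+δr^{2θ})). Then there exists a constant C > 0 such that for all sufficiently large t, |∫_{1/t}^{ε₀} e^{−r²} cos(2tf(r)) (1+δr^{2θ})/(μr³+κr) dr| ≤ C. -/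
/-!
Write the integrand as `g r * cos (2 * t * f r)`, `g r = exp (-r²) (1 + δ r^{2θ}) / (μ r³ + κ r)`.
Since `d/dr sin (2 t f r) = 2 t f' r cos (2 t f r)`, integrating by parts against `u = g / f'`
bounds the integral by `(|u (1/t)| + |u ε₀| + ∫_{1/t}^{ε₀} |u'|) / (2t)`.

The bookkeeping is done in the symbol classes `S^k`: functions with `|h| ≲ r^k` and
`|h'| ≲ r^(k-1)` on `(0, ε₀]`. They are closed under sums, products, square roots and quotients
by functions bounded below by `c r^k`. With `P = μ r⁴ + κ r²` and `Q = 1 + δ r^{2θ}` one has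
`f' = (P'Q - PQ') / (2 Q² f)`, and the choice of `ε₀` keeps `P'Q - PQ' ≥ κ r`, so `f'` is in
`S^0` and bounded below by a positive constant. Since `g ∈ S^{-1}`, also `u ∈ S^{-1}`.
Then the boundary terms are `O(t)`, and `∫_{1/t}^{ε₀} |u'| ≲ ∫_{1/t}^{ε₀} r^{-2} ≤ t`.
-/

open MeasureTheory Real Set

lemma nonneg_of_abs_le_mul_zpow {A y x : ℝ} {k : ℤ} (hx : 0 < x) (h : |y| ≤ A * x ^ k) : 0 ≤ A :=
  nonneg_of_mul_nonneg_left ((abs_nonneg y).trans h) (zpow_pos hx k)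

/-- The first-order symbol class `S^k` at the origin, on the interval `(0, ε]`. -/
def IsSymbol (k : ℤ) (ε : ℝ) (h : ℝ → ℝ) : Prop :=
  ∃ A, ∀ x ∈ Ioc 0 ε, DifferentiableAt ℝ h x ∧ |h x| ≤ A * x ^ k ∧ |deriv h x| ≤ A * x ^ (k - 1)

namespace IsSymbol

variable {k m : ℤ} {ε : ℝ} {f g : ℝ → ℝ}

lemma const (c : ℝ) : IsSymbol 0 ε (fun _ => c) :=
  ⟨|c|, fun x hx => ⟨differentiableAt_const c, by simp,
    by simpa using mul_nonneg (abs_nonneg c) (inv_nonneg.2 hx.1.le)⟩⟩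

lemma id : IsSymbol 1 ε (fun x => x) :=
  ⟨1, fun x hx => ⟨differentiableAt_id, by simp [abs_of_pos hx.1], by simp⟩⟩

lemma continuousOn (hf : IsSymbol k ε f) : ContinuousOn f (Ioc 0 ε) := by
  obtain ⟨A, hA⟩ := hf
  exact fun x hx => (hA x hx).1.continuousAt.continuousWithinAt

lemma add (hf : IsSymbol k ε f) (hg : IsSymbol k ε g) : IsSymbol k ε (fun x => f x + g x) := by
  obtain ⟨A, hA⟩ := hf
  obtain ⟨B, hB⟩ := hg
  refine ⟨A + B, fun x hx => ?_⟩
  obtain ⟨hfd, hf0, hf1⟩ := hA x hx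
  obtain ⟨hgd, hg0, hg1⟩ := hB x hx
  refine ⟨hfd.add hgd, ?_, ?_⟩
  · calc |f x + g x| ≤ |f x| + |g x| := abs_add_le _ _
      _ ≤ (A + B) * x ^ k := by linarith
  · rw [deriv_fun_add hfd hgd]
    calc |deriv f x + deriv g x| ≤ |deriv f x| + |deriv g x| := abs_add_le _ _
      _ ≤ (A + B) * x ^ (k - 1) := by linarith

lemma neg (hf : IsSymbol k ε f) : IsSymbol k ε (fun x => -f x) := by
  obtain ⟨A, hA⟩ := hf
  refine ⟨A, fun x hx => ?_⟩
  obtain ⟨hfd, hf0, hf1⟩ := hA x hx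
  exact ⟨hfd.neg, by rwa [abs_neg], by rwa [deriv.fun_neg, abs_neg]⟩

lemma sub (hf : IsSymbol k ε f) (hg : IsSymbol k ε g) : IsSymbol k ε (fun x => f x - g x) := by
  simpa only [sub_eq_add_neg] using hf.add hg.neg

lemma mul (hf : IsSymbol k ε f) (hg : IsSymbol m ε g) :
    IsSymbol (k + m) ε (fun x => f x * g x) := by
  obtain ⟨A, hA⟩ := hf
  obtain ⟨B, hB⟩ := hg
  refine ⟨2 * A * B, fun x hx => ?_⟩
  obtain ⟨hfd, hf0, hf1⟩ := hA x hx
  obtain ⟨hgd, hg0, hg1⟩ := hB x hx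
  have hx0 : x ≠ 0 := hx.1.ne'
  have hA0 := nonneg_of_abs_le_mul_zpow hx.1 hf0
  have hB0 := nonneg_of_abs_le_mul_zpow hx.1 hg0
  refine ⟨hfd.mul hgd, ?_, ?_⟩
  · rw [abs_mul, zpow_add₀ hx0]
    have hAB : 0 ≤ A * x ^ k * (B * x ^ m) :=
      mul_nonneg (mul_nonneg hA0 (zpow_pos hx.1 k).le) (mul_nonneg hB0 (zpow_pos hx.1 m).le)
    calc |f x| * |g x| ≤ (A * x ^ k) * (B * x ^ m) :=
          mul_le_mul hf0 hg0 (abs_nonneg _) (mul_nonneg hA0 (zpow_pos hx.1 k).le)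
      _ ≤ 2 * A * B * (x ^ k * x ^ m) := by linarith
  · rw [deriv_fun_mul hfd hgd]
    have e₁ : x ^ (k + m - 1) = x ^ (k - 1) * x ^ m := by
      rw [← zpow_add₀ hx0]; ring_nf
    have e₂ : x ^ (k + m - 1) = x ^ k * x ^ (m - 1) := by
      rw [← zpow_add₀ hx0]; ring_nf
    calc |deriv f x * g x + f x * deriv g x| ≤ |deriv f x| * |g x| + |f x| * |deriv g x| := by
          rw [← abs_mul, ← abs_mul]; exact abs_add_le _ _
      _ ≤ (A * x ^ (k - 1)) * (B * x ^ m) + (A * x ^ k) * (B * x ^ (m - 1)) := by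
          gcongr
          · exact mul_nonneg hA0 (zpow_pos hx.1 _).le
          · exact mul_nonneg hA0 (zpow_pos hx.1 _).le
      _ = 2 * A * B * x ^ (k + m - 1) := by
          rw [mul_mul_mul_comm, mul_mul_mul_comm A _ B, ← e₁, ← e₂]; ring

lemma const_mul (c : ℝ) (hf : IsSymbol k ε f) : IsSymbol k ε (fun x => c * f x) := by
  simpa using (const c).mul hf

lemma mono (hε : ε ≤ 1) {j : ℤ} (hjk : j ≤ k) (hf : IsSymbol k ε f) : IsSymbol j ε f := by
  obtain ⟨A, hA⟩ := hf
  refine ⟨A, fun x hx => ?_⟩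
  obtain ⟨hfd, hf0, hf1⟩ := hA x hx
  have hA0 := nonneg_of_abs_le_mul_zpow hx.1 hf0
  have hx1 : x ≤ 1 := hx.2.trans hε
  refine ⟨hfd, hf0.trans ?_, hf1.trans ?_⟩ <;>
    exact mul_le_mul_of_nonneg_left (zpow_le_zpow_right_of_le_one₀ hx.1 hx1 (by omega)) hA0

lemma pow (n : ℕ) : IsSymbol n ε (fun x => x ^ n) := by
  induction n with
  | zero => simpa using const (ε := ε) 1
  | succ n ih => simpa [pow_succ] using ih.mul id

lemma inv {c : ℝ} (hc : 0 < c) (hlow : ∀ x ∈ Ioc 0 ε, c * x ^ k ≤ f x) (hf : IsSymbol k ε f) :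
    IsSymbol (-k) ε (fun x => (f x)⁻¹) := by
  obtain ⟨A, hA⟩ := hf
  refine ⟨c⁻¹ + A / c ^ 2, fun x hx => ?_⟩
  obtain ⟨hfd, hf0, hf1⟩ := hA x hx
  have hA0 := nonneg_of_abs_le_mul_zpow hx.1 hf0
  have hxk := zpow_pos hx.1 k
  have hlowx : c * x ^ k ≤ f x := hlow x hx
  have hfx : 0 < f x := lt_of_lt_of_le (by positivity) hlowx
  refine ⟨hfd.inv hfx.ne', ?_, ?_⟩
  · rw [abs_inv, abs_of_pos hfx, zpow_neg]
    calc (f x)⁻¹ ≤ (c * x ^ k)⁻¹ := inv_anti₀ (by positivity) hlowx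
      _ = c⁻¹ * (x ^ k)⁻¹ := mul_inv c _
      _ ≤ (c⁻¹ + A / c ^ 2) * (x ^ k)⁻¹ := by gcongr; exact le_add_of_nonneg_right (by positivity)
  · rw [deriv_fun_inv'' hfd hfx.ne', abs_div, abs_neg, abs_pow, abs_of_pos hfx,
      div_le_iff₀ (by positivity)]
    have e : x ^ (k - 1) = x ^ (-k - 1) * (x ^ k) ^ 2 := by
      rw [sq, ← zpow_add₀ hx.1.ne', ← zpow_add₀ hx.1.ne']; ring_nf
    have hsq : (c * x ^ k) ^ 2 ≤ f x ^ 2 := pow_le_pow_left₀ (by positivity) hlowx 2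
    calc |deriv f x| ≤ A * x ^ (k - 1) := hf1
      _ = A / c ^ 2 * x ^ (-k - 1) * (c * x ^ k) ^ 2 := by rw [e]; field_simp
      _ ≤ (c⁻¹ + A / c ^ 2) * x ^ (-k - 1) * f x ^ 2 := by
          have := zpow_pos hx.1 (-k - 1)
          gcongr
          exact le_add_of_nonneg_left (by positivity)

lemma div {c : ℝ} (hc : 0 < c) (hlow : ∀ x ∈ Ioc 0 ε, c * x ^ m ≤ g x) (hf : IsSymbol k ε f)
    (hg : IsSymbol m ε g) : IsSymbol (k - m) ε (fun x => f x / g x) := by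
  simpa only [div_eq_mul_inv, sub_eq_add_neg] using hf.mul (hg.inv hc hlow)

lemma sqrt {c : ℝ} (hc : 0 < c) (hlow : ∀ x ∈ Ioc 0 ε, c * x ^ (2 * k) ≤ f x)
    (hf : IsSymbol (2 * k) ε f) : IsSymbol k ε (fun x => √(f x)) := by
  obtain ⟨A, hA⟩ := hf
  refine ⟨√A + A / (2 * √c), fun x hx => ?_⟩
  obtain ⟨hfd, hf0, hf1⟩ := hA x hx
  have hA0 := nonneg_of_abs_le_mul_zpow hx.1 hf0
  have hxk := zpow_pos hx.1 k
  have hxk1 := zpow_pos hx.1 (k - 1)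
  have hx2k := zpow_pos hx.1 (2 * k)
  have hfx : 0 < f x := lt_of_lt_of_le (by positivity) (hlow x hx)
  have e : x ^ (2 * k) = (x ^ k) ^ 2 := by rw [← zpow_natCast, ← zpow_mul]; ring_nf
  have hsqrt_le : √(f x) ≤ √A * x ^ k := by
    calc √(f x) ≤ √(A * (x ^ k) ^ 2) := Real.sqrt_le_sqrt ((le_abs_self _).trans (e ▸ hf0))
      _ = √A * x ^ k := by rw [Real.sqrt_mul hA0, Real.sqrt_sq hxk.le]
  have hsqrt_ge : √c * x ^ k ≤ √(f x) := by
    calc √c * x ^ k = √(c * (x ^ k) ^ 2) := by rw [Real.sqrt_mul hc.le, Real.sqrt_sq hxk.le]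
      _ ≤ √(f x) := Real.sqrt_le_sqrt (e ▸ hlow x hx)
  refine ⟨hfd.sqrt hfx.ne', ?_, ?_⟩
  · rw [abs_of_nonneg (Real.sqrt_nonneg _)]
    exact hsqrt_le.trans (by gcongr; exact le_add_of_nonneg_right (by positivity))
  · rw [deriv_sqrt hfd hfx.ne', abs_div, abs_of_pos (by positivity : 0 < 2 * √(f x)),
      div_le_iff₀ (by positivity)]
    have e' : x ^ (2 * k - 1) = x ^ (k - 1) * x ^ k := by
      rw [← zpow_add₀ hx.1.ne']; ring_nf
    calc |deriv f x| ≤ A * x ^ (2 * k - 1) := hf1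
      _ = A / (2 * √c) * x ^ (k - 1) * (2 * (√c * x ^ k)) := by
          rw [e']; field_simp
      _ ≤ (√A + A / (2 * √c)) * x ^ (k - 1) * (2 * √(f x)) := by
          gcongr
          exact le_add_of_nonneg_left (Real.sqrt_nonneg _)

lemma rpow (hε : ε ≤ 1) {r : ℝ} (hr : 0 ≤ r) : IsSymbol 0 ε (fun x => x ^ r) := by
  refine ⟨1 + r, fun x hx => ?_⟩
  have hx0 : 0 < x := hx.1
  have hx1 : x ≤ 1 := hx.2.trans hε
  have hxr : x ^ r ≤ 1 := Real.rpow_le_one hx.1.le hx1 hr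
  refine ⟨Real.differentiableAt_rpow_const_of_ne r hx.1.ne', ?_, ?_⟩
  · rw [abs_of_nonneg (by positivity)]; simp only [zpow_zero, mul_one]; linarith
  · rw [Real.deriv_rpow_const, Real.rpow_sub_one hx.1.ne', abs_of_nonneg (by positivity)]
    simp only [zero_sub, zpow_neg_one]
    calc r * (x ^ r / x) ≤ r * x⁻¹ := by
          rw [div_eq_mul_inv]; gcongr; exact mul_le_of_le_one_left (by positivity) hxr
      _ ≤ (1 + r) * x⁻¹ := by gcongr; linarith

lemma exp_neg_sq (hε : ε ≤ 1) : IsSymbol 0 ε (fun x => exp (-x ^ 2)) := by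
  refine ⟨2, fun x hx => ?_⟩
  have hx0 : 0 < x := hx.1
  have hx1 : x ≤ 1 := hx.2.trans hε
  have hexp : exp (-x ^ 2) ≤ 1 := Real.exp_le_one_iff.2 (by nlinarith)
  have hd : HasDerivAt (fun x => exp (-x ^ 2)) (exp (-x ^ 2) * (-(2 * x))) x := by
    simpa using ((hasDerivAt_pow 2 x).neg).exp
  refine ⟨hd.differentiableAt, ?_, ?_⟩
  · rw [abs_of_pos (exp_pos _)]; simp only [zpow_zero]; linarith
  · rw [hd.deriv, abs_mul, abs_of_pos (exp_pos _), abs_neg, abs_of_pos (by linarith [hx.1])]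
    simp only [zero_sub, zpow_neg_one]
    calc exp (-x ^ 2) * (2 * x) ≤ 1 * 2 := by
          gcongr; linarith
      _ ≤ 2 * x⁻¹ := by
          have : 1 ≤ x⁻¹ := one_le_inv₀ hx.1 |>.2 hx1
          linarith

end IsSymbol

theorem abs_integral_mul_mul_cos_le {a b c : ℝ} {u φ φ' : ℝ → ℝ} (hab : a ≤ b) (hc : 0 < c)
    (hu : ∀ x ∈ Icc a b, DifferentiableAt ℝ u x) (hu' : IntervalIntegrable (deriv u) volume a b)
    (hφ : ∀ x ∈ Icc a b, HasDerivAt φ (φ' x) x) (hφ' : ContinuousOn φ' (Icc a b)) :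
    |∫ x in a..b, u x * φ' x * cos (c * φ x)| ≤
      (|u a| + |u b| + ∫ x in a..b, |deriv u x|) / c := by
  rw [← uIcc_of_le hab] at hu hφ hφ'
  let v x := sin (c * φ x) / c
  have hv : ∀ x ∈ uIcc a b, HasDerivAt v (φ' x * cos (c * φ x)) x := fun x hx => by
    refine ((((hφ x hx).const_mul c).sin).div_const c).congr_deriv ?_
    field_simp
  have hv' : IntervalIntegrable (fun x => φ' x * cos (c * φ x)) volume a b := by
    refine ContinuousOn.intervalIntegrable (hφ'.mul ?_)
    exact continuous_cos.comp_continuousOn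
      (continuousOn_const.mul fun x hx => (hφ x hx).continuousAt.continuousWithinAt)
  have hv_le : ∀ x, |v x| ≤ 1 / c := fun x => by
    rw [abs_div, abs_of_pos hc]; gcongr; exact abs_sin_le_one _
  have hrem : |∫ x in a..b, deriv u x * v x| ≤ (∫ x in a..b, |deriv u x|) / c := by
    rw [← intervalIntegral.integral_div]
    refine (Real.norm_eq_abs _).symm.trans_le <| intervalIntegral.norm_integral_le_of_norm_le
      hab (ae_of_all _ fun x _ => ?_) (hu'.abs.div_const c)
    rw [norm_mul, Real.norm_eq_abs, Real.norm_eq_abs, div_eq_mul_one_div]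
    exact mul_le_mul_of_nonneg_left (hv_le x) (abs_nonneg _)
  simp_rw [mul_assoc]
  rw [intervalIntegral.integral_mul_deriv_eq_deriv_mul (fun x hx => (hu x hx).hasDerivAt) hv hu'
    hv']
  have hva := hv_le a
  have hvb := hv_le b
  calc |u b * v b - u a * v a - ∫ x in a..b, deriv u x * v x|
      ≤ |u b| * |v b| + |u a| * |v a| + |∫ x in a..b, deriv u x * v x| := by
        rw [← abs_mul, ← abs_mul]
        exact (abs_sub _ _).trans (add_le_add_left (abs_sub _ _) _)
    _ ≤ |u b| * (1 / c) + |u a| * (1 / c) + (∫ x in a..b, |deriv u x|) / c := by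
        gcongr
    _ = (|u a| + |u b| + ∫ x in a..b, |deriv u x|) / c := by ring

theorem IsSymbol.exists_abs_integral_mul_mul_cos_le {ε : ℝ} {u φ φ' : ℝ → ℝ} (hε : 0 < ε)
    (hu : IsSymbol (-1) ε u) (hφ : ∀ x ∈ Ioc 0 ε, HasDerivAt φ (φ' x) x)
    (hφ' : ContinuousOn φ' (Ioc 0 ε)) :
    ∃ C, ∀ t c, 1 / ε ≤ t → t ≤ c → |∫ x in 1 / t..ε, u x * φ' x * cos (c * φ x)| ≤ C := by
  obtain ⟨A, hA⟩ := hu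
  have hA0 : 0 ≤ A := nonneg_of_abs_le_mul_zpow hε (hA ε ⟨hε, le_rfl⟩).2.1
  refine ⟨3 * A, fun t c ht htc => ?_⟩
  have ht0 : 0 < t := (one_div_pos.2 hε).trans_le ht
  have hab : 1 / t ≤ ε := (one_div_le hε ht0).1 ht
  have hsub : Icc (1 / t) ε ⊆ Ioc 0 ε := fun x hx => ⟨(one_div_pos.2 ht0).trans_le hx.1, hx.2⟩
  have hzero : (0 : ℝ) ∉ uIcc (1 / t) ε := by
    rw [uIcc_of_le hab]; exact fun h => (one_div_pos.2 ht0).not_ge h.1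
  have hg : IntervalIntegrable (fun x => A * x ^ (-2 : ℤ)) volume (1 / t) ε :=
    (intervalIntegral.intervalIntegrable_zpow (Or.inr hzero)).const_mul A
  have hderiv_le : ∀ x ∈ Icc (1 / t) ε, |deriv u x| ≤ A * x ^ (-2 : ℤ) :=
    fun x hx => (hA x (hsub hx)).2.2
  have hu' : IntervalIntegrable (deriv u) volume (1 / t) ε := by
    refine hg.mono_fun' (measurable_deriv u).aestronglyMeasurable ?_
    rw [uIoc_of_le hab]
    refine (ae_restrict_iff' measurableSet_Ioc).2 (ae_of_all _ fun x hx => ?_)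
    exact hderiv_le x (Ioc_subset_Icc_self hx)
  have hvar : ∫ x in 1 / t..ε, |deriv u x| ≤ A * t := by
    calc ∫ x in 1 / t..ε, |deriv u x| ≤ ∫ x in 1 / t..ε, A * x ^ (-2 : ℤ) :=
          intervalIntegral.integral_mono_on hab hu'.abs hg hderiv_le
      _ = A * (t - 1 / ε) := by
          rw [intervalIntegral.integral_const_mul, integral_zpow (Or.inr ⟨by norm_num, hzero⟩)]
          congr 1
          norm_num
          ring
      _ ≤ A * t := by gcongr; linarith [one_div_pos.2 hε]
  have hua : |u (1 / t)| ≤ A * t := by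
    simpa using (hA (1 / t) (hsub ⟨le_rfl, hab⟩)).2.1
  have hub : |u ε| ≤ A * t := by
    calc |u ε| ≤ A * ε ^ (-1 : ℤ) := (hA ε ⟨hε, le_rfl⟩).2.1
      _ ≤ A * t := by rw [zpow_neg_one, ← one_div]; gcongr
  calc |∫ x in 1 / t..ε, u x * φ' x * cos (c * φ x)|
      ≤ (|u (1 / t)| + |u ε| + ∫ x in 1 / t..ε, |deriv u x|) / c :=
        abs_integral_mul_mul_cos_le hab (ht0.trans_le htc)
          (fun x hx => (hA x (hsub hx)).1) hu' (fun x hx => hφ x (hsub hx)) (hφ'.mono hsub)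
    _ ≤ 3 * A * t / c := div_le_div_of_nonneg_right (by linarith) (ht0.trans_le htc).le
    _ ≤ 3 * A := by
        rw [div_le_iff₀ (ht0.trans_le htc)]; gcongr

noncomputable def phaseSq (δ θ μ κ r : ℝ) : ℝ :=
  (μ * r ^ 4 + κ * r ^ 2) / (1 + δ * r ^ (2 * θ))

noncomputable def phase (δ θ μ κ r : ℝ) : ℝ :=
  √(phaseSq δ θ μ κ r)

/-- `P'Q - PQ'` for `P r = μ r⁴ + κ r²` and `Q r = 1 + δ r^(2θ)`, so that the derivative of
`phase = √(P / Q)` is `phaseDeriv = (P'Q - PQ') / (2 Q² phase)`. -/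
noncomputable def phaseNumerator (δ θ μ κ r : ℝ) : ℝ :=
  (4 * μ * r ^ 3 + 2 * κ * r) * (1 + δ * r ^ (2 * θ)) -
    2 * δ * θ * (μ * r ^ 3 + κ * r) * r ^ (2 * θ)

noncomputable def phaseDeriv (δ θ μ κ r : ℝ) : ℝ :=
  phaseNumerator δ θ μ κ r / (2 * (1 + δ * r ^ (2 * θ)) ^ 2 * phase δ θ μ κ r)

noncomputable def amplitude (δ θ μ κ r : ℝ) : ℝ :=
  exp (-r ^ 2) * (1 + δ * r ^ (2 * θ)) / (μ * r ^ 3 + κ * r)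

section Phase

variable {δ θ μ κ ε x : ℝ}

lemma hasDerivAt_phase (hδ : 0 ≤ δ) (hμ : 0 ≤ μ) (hκ : 0 < κ) (hx : 0 < x) :
    HasDerivAt (phase δ θ μ κ) (phaseDeriv δ θ μ κ x) x := by
  have hQ : 0 < 1 + δ * x ^ (2 * θ) := by positivity
  have hP : 0 < μ * x ^ 4 + κ * x ^ 2 := by positivity
  have hP' : HasDerivAt (fun r => μ * r ^ 4 + κ * r ^ 2) (4 * μ * x ^ 3 + 2 * κ * x) x := by
    refine (((hasDerivAt_pow 4 x).const_mul μ).add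
      ((hasDerivAt_pow 2 x).const_mul κ)).congr_deriv ?_
    ring
  have hQ' : HasDerivAt (fun r => 1 + δ * r ^ (2 * θ)) (δ * (2 * θ * x ^ (2 * θ - 1))) x :=
    ((Real.hasDerivAt_rpow_const (Or.inl hx.ne')).const_mul δ).const_add 1
  refine ((hP'.div hQ' hQ.ne').sqrt (div_pos hP hQ).ne').congr_deriv ?_
  rw [phaseDeriv, phaseNumerator, phase, phaseSq, Real.rpow_sub_one hx.ne', Pi.div_apply]
  field_simp

lemma isSymbol_weight (hε : ε ≤ 1) (hθ : 0 ≤ θ) :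
    IsSymbol 0 ε (fun r => 1 + δ * r ^ (2 * θ)) :=
  (IsSymbol.const 1).add ((IsSymbol.rpow hε (by positivity)).const_mul δ)

lemma weight_le (hδ : 0 ≤ δ) (hθ : 0 ≤ θ) (hx : 0 < x) (hx1 : x ≤ 1) :
    1 + δ * x ^ (2 * θ) ≤ 1 + δ := by
  have := Real.rpow_le_one hx.le hx1 (by positivity : 0 ≤ 2 * θ)
  nlinarith

lemma phaseSq_ge (hδ : 0 ≤ δ) (hθ : 0 ≤ θ) (hμ : 0 ≤ μ) (hκ : 0 < κ) (hx : 0 < x)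
    (hx1 : x ≤ 1) : κ / (1 + δ) * x ^ 2 ≤ phaseSq δ θ μ κ x := by
  rw [phaseSq, div_mul_eq_mul_div, div_le_div_iff₀ (by positivity) (by positivity)]
  have hQ := mul_le_mul_of_nonneg_left (weight_le hδ hθ hx hx1) (by positivity : 0 ≤ κ * x ^ 2)
  have : 0 ≤ μ * x ^ 4 * (1 + δ) := by positivity
  linarith

lemma phaseSq_le (hδ : 0 ≤ δ) (hμ : 0 ≤ μ) (hκ : 0 < κ) (hx : 0 < x) (hx1 : x ≤ 1) :
    phaseSq δ θ μ κ x ≤ (μ + κ) * x ^ 2 := by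
  refine (div_le_self (by positivity) (le_add_of_nonneg_right (by positivity))).trans ?_
  have : x ^ 4 ≤ x ^ 2 := pow_le_pow_of_le_one hx.le hx1 (by norm_num)
  nlinarith

lemma sqrt_mul_le_phase (hδ : 0 ≤ δ) (hθ : 0 ≤ θ) (hμ : 0 ≤ μ) (hκ : 0 < κ) (hx : 0 < x)
    (hx1 : x ≤ 1) : √(κ / (1 + δ)) * x ≤ phase δ θ μ κ x := by
  calc √(κ / (1 + δ)) * x = √(κ / (1 + δ) * x ^ 2) := by
        rw [Real.sqrt_mul (by positivity), Real.sqrt_sq hx.le]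
    _ ≤ phase δ θ μ κ x := Real.sqrt_le_sqrt (phaseSq_ge hδ hθ hμ hκ hx hx1)

lemma phase_le (hδ : 0 ≤ δ) (hμ : 0 ≤ μ) (hκ : 0 < κ) (hx : 0 < x) (hx1 : x ≤ 1) :
    phase δ θ μ κ x ≤ √(μ + κ) * x := by
  calc phase δ θ μ κ x ≤ √((μ + κ) * x ^ 2) := Real.sqrt_le_sqrt (phaseSq_le hδ hμ hκ hx hx1)
    _ = √(μ + κ) * x := by rw [Real.sqrt_mul (by positivity), Real.sqrt_sq hx.le]

lemma isSymbol_cubic (hε : ε ≤ 1) (a b : ℝ) : IsSymbol 1 ε (fun r => a * r ^ 3 + b * r) :=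
  (((IsSymbol.pow 3).const_mul a).mono hε (by norm_num)).add (IsSymbol.id.const_mul b)

lemma isSymbol_phase (hε : ε ≤ 1) (hδ : 0 ≤ δ) (hθ : 0 ≤ θ) (hμ : 0 ≤ μ) (hκ : 0 < κ) :
    IsSymbol 1 ε (phase δ θ μ κ) := by
  have hP : IsSymbol 2 ε (fun r => μ * r ^ 4 + κ * r ^ 2) :=
    (((IsSymbol.pow 4).const_mul μ).mono hε (by norm_num)).add ((IsSymbol.pow 2).const_mul κ)
  have hF : IsSymbol (2 * 1) ε (phaseSq δ θ μ κ) :=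
    hP.div one_pos (fun x hx => by have := hx.1; simp; positivity) (isSymbol_weight hε hθ)
  exact hF.sqrt (c := κ / (1 + δ)) (by positivity)
    (fun x hx => by simpa using phaseSq_ge hδ hθ hμ hκ hx.1 (hx.2.trans hε))

lemma isSymbol_phaseNumerator (hε : ε ≤ 1) (hθ : 0 ≤ θ) :
    IsSymbol 1 ε (phaseNumerator δ θ μ κ) :=
  ((isSymbol_cubic hε _ _).mul (isSymbol_weight hε hθ)).sub
    (((isSymbol_cubic hε μ κ).const_mul (2 * δ * θ)).mul (IsSymbol.rpow hε (by positivity)))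

lemma phaseNumerator_ge (hδ : 0 ≤ δ) (hθ : 0 ≤ θ) (hμ : 0 ≤ μ) (hκ : 0 < κ) (hε1 : ε ≤ 1)
    (hκε : 2 * (μ + κ) * δ * θ * ε ^ (2 * θ) ≤ κ) (hx : x ∈ Ioc 0 ε) :
    κ * x ≤ phaseNumerator δ θ μ κ x := by
  obtain ⟨hx0, hxε⟩ := hx
  have hQ : 1 ≤ 1 + δ * x ^ (2 * θ) := le_add_of_nonneg_right (by positivity)
  have hxr : x ^ (2 * θ) ≤ ε ^ (2 * θ) := Real.rpow_le_rpow hx0.le hxε (by positivity)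
  have hx2 : μ * x ^ 2 + κ ≤ μ + κ := by
    have : x ^ 2 ≤ 1 := pow_le_one₀ hx0.le (hxε.trans hε1)
    nlinarith
  have hlead : 2 * κ * x ≤ (4 * μ * x ^ 3 + 2 * κ * x) * (1 + δ * x ^ (2 * θ)) := by
    have : 0 ≤ 4 * μ * x ^ 3 := by positivity
    nlinarith [mul_le_mul_of_nonneg_left hQ (by positivity : 0 ≤ 4 * μ * x ^ 3 + 2 * κ * x)]
  -- the defining property of `ε`: the correction term is at most half the leading term
  have hcorr : 2 * δ * θ * (μ * x ^ 2 + κ) * x ^ (2 * θ) ≤ κ := by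
    calc 2 * δ * θ * (μ * x ^ 2 + κ) * x ^ (2 * θ) ≤ 2 * δ * θ * (μ + κ) * ε ^ (2 * θ) := by
          gcongr
      _ ≤ κ := by linarith
  rw [phaseNumerator]
  nlinarith

lemma phaseDeriv_ge (hδ : 0 ≤ δ) (hθ : 0 ≤ θ) (hμ : 0 ≤ μ) (hκ : 0 < κ) (hε1 : ε ≤ 1)
    (hκε : 2 * (μ + κ) * δ * θ * ε ^ (2 * θ) ≤ κ) (hx : x ∈ Ioc 0 ε) :
    κ / (2 * (1 + δ) ^ 2 * √(μ + κ)) ≤ phaseDeriv δ θ μ κ x := by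
  have hx0 : 0 < x := hx.1
  have hx1 : x ≤ 1 := hx.2.trans hε1
  have hphase : 0 < phase δ θ μ κ x :=
    (by positivity : 0 < √(κ / (1 + δ)) * x).trans_le (sqrt_mul_le_phase hδ hθ hμ hκ hx0 hx1)
  have hQ := weight_le hδ hθ hx0 hx1
  calc κ / (2 * (1 + δ) ^ 2 * √(μ + κ)) = κ * x / (2 * (1 + δ) ^ 2 * (√(μ + κ) * x)) := by
        field_simp
    _ ≤ phaseDeriv δ θ μ κ x := by
        have hN := phaseNumerator_ge hδ hθ hμ hκ hε1 hκε hx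
        refine div_le_div₀ ((by positivity : 0 ≤ κ * x).trans hN) hN (by positivity) ?_
        gcongr
        exact phase_le hδ hμ hκ hx0 hx1

lemma isSymbol_phaseDeriv (hε : ε ≤ 1) (hδ : 0 ≤ δ) (hθ : 0 ≤ θ) (hμ : 0 ≤ μ) (hκ : 0 < κ) :
    IsSymbol 0 ε (phaseDeriv δ θ μ κ) := by
  have hQ := isSymbol_weight (δ := δ) hε hθ
  have hden : IsSymbol 1 ε (fun r => 2 * (1 + δ * r ^ (2 * θ)) ^ 2 * phase δ θ μ κ r) := by
    simpa only [← sq, zero_add] using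
      ((IsSymbol.const 2).mul (hQ.mul hQ)).mul (isSymbol_phase hε hδ hθ hμ hκ)
  refine (isSymbol_phaseNumerator hε hθ).div (c := 2 * √(κ / (1 + δ))) (by positivity)
    (fun x hx => ?_) hden
  have hQ1 : 1 ≤ (1 + δ * x ^ (2 * θ)) ^ 2 :=
    one_le_pow₀ (le_add_of_nonneg_right (by have := hx.1; positivity))
  have hphase := sqrt_mul_le_phase hδ hθ hμ hκ hx.1 (hx.2.trans hε)
  have hx0 : 0 < x := hx.1
  calc 2 * √(κ / (1 + δ)) * x ^ (1 : ℤ) = 2 * (1 * (√(κ / (1 + δ)) * x)) := by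
        rw [zpow_one]; ring
    _ ≤ 2 * ((1 + δ * x ^ (2 * θ)) ^ 2 * phase δ θ μ κ x) := by gcongr
    _ = 2 * (1 + δ * x ^ (2 * θ)) ^ 2 * phase δ θ μ κ x := by ring

lemma isSymbol_amplitude (hε : ε ≤ 1) (hθ : 0 ≤ θ) (hμ : 0 ≤ μ) (hκ : 0 < κ) :
    IsSymbol (-1) ε (amplitude δ θ μ κ) :=
  ((IsSymbol.exp_neg_sq hε).mul (isSymbol_weight hε hθ)).div hκ
    (fun x hx => by have := hx.1; simp only [zpow_one]; nlinarith [pow_pos hx.1 3])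
    (isSymbol_cubic hε μ κ)

theorem exists_abs_integral_amplitude_mul_cos_le (hδ : 0 ≤ δ) (hθ : 0 ≤ θ) (hμ : 0 ≤ μ)
    (hκ : 0 < κ) (hε : 0 < ε) (hε1 : ε ≤ 1) (hκε : 2 * (μ + κ) * δ * θ * ε ^ (2 * θ) ≤ κ) :
    ∃ C, ∀ t, 1 / ε ≤ t →
      |∫ x in 1 / t..ε, amplitude δ θ μ κ x * cos (2 * t * phase δ θ μ κ x)| ≤ C := by
  have hlow : ∀ x ∈ Ioc 0 ε,
      κ / (2 * (1 + δ) ^ 2 * √(μ + κ)) * x ^ (0 : ℤ) ≤ phaseDeriv δ θ μ κ x := fun x hx => by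
    simpa using phaseDeriv_ge hδ hθ hμ hκ hε1 hκε hx
  have hu : IsSymbol (-1) ε (fun x => amplitude δ θ μ κ x / phaseDeriv δ θ μ κ x) :=
    (isSymbol_amplitude hε1 hθ hμ hκ).div (by positivity) hlow
      (isSymbol_phaseDeriv hε1 hδ hθ hμ hκ)
  obtain ⟨C, hC⟩ := hu.exists_abs_integral_mul_mul_cos_le hε
    (fun x hx => hasDerivAt_phase hδ hμ hκ hx.1)
    (isSymbol_phaseDeriv hε1 hδ hθ hμ hκ).continuousOn
  refine ⟨C, fun t ht => ?_⟩
  have ht0 : 0 < t := (one_div_pos.2 hε).trans_le ht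
  have hab : 1 / t ≤ ε := (one_div_le hε ht0).1 ht
  have hphaseDeriv : ∀ x ∈ uIcc (1 / t) ε, phaseDeriv δ θ μ κ x ≠ 0 := fun x hx => by
    rw [uIcc_of_le hab] at hx
    have hx' : x ∈ Ioc 0 ε := ⟨(one_div_pos.2 ht0).trans_le hx.1, hx.2⟩
    exact ((by positivity : (0 : ℝ) < _).trans_le (phaseDeriv_ge hδ hθ hμ hκ hε1 hκε hx')).ne'
  rw [intervalIntegral.integral_congr fun x hx => by
    rw [← div_mul_cancel₀ (amplitude δ θ μ κ x) (hphaseDeriv x hx)]]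
  exact hC t (2 * t) ht (by linarith)

end Phase

lemma mul_rpow_le_of_le_rpow_one_div {a b p ε : ℝ} (ha : 0 < a) (hb : 0 ≤ b) (hp : 0 < p)
    (hε : 0 ≤ ε) (h : ε ≤ (b / a) ^ (1 / p)) : a * ε ^ p ≤ b := by
  rw [one_div, Real.le_rpow_inv_iff_of_pos hε (by positivity) hp] at h
  rwa [le_div_iff₀' ha] at h

theorem stmt13_general (δ θ μ κ : ℝ) (hδ : 0 < δ) (hθ : 0 < θ)
    (hμ : 0 ≤ μ) (hκ : 0 < κ)
    (ε₀ : ℝ) (hε₀ : ε₀ = min ((κ / (2 * (μ + κ) * δ * θ)) ^ (1 / (2 * θ))) 1)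
    (f : ℝ → ℝ)
    (hf : ∀ r : ℝ, f r = Real.sqrt ((μ * r ^ 4 + κ * r ^ 2) / (1 + δ * r ^ (2 * θ)))) :
    ∃ C : ℝ, 0 < C ∧ ∃ T : ℝ, ∀ t ≥ T,
      |∫ r in Set.Icc (1 / t) ε₀,
          Real.exp (-r ^ 2) * Real.cos (2 * t * f r) * (1 + δ * r ^ (2 * θ)) / (μ * r ^ 3 + κ * r)|
        ≤ C := by
  have hε₀pos : 0 < ε₀ := by rw [hε₀]; exact lt_min (by positivity) one_pos
  have hε₀1 : ε₀ ≤ 1 := hε₀ ▸ min_le_right _ _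
  have hκε : 2 * (μ + κ) * δ * θ * ε₀ ^ (2 * θ) ≤ κ :=
    mul_rpow_le_of_le_rpow_one_div (by positivity) hκ.le (by positivity) hε₀pos.le
      (hε₀ ▸ min_le_left _ _)
  obtain ⟨C, hC⟩ := exists_abs_integral_amplitude_mul_cos_le hδ.le hθ.le hμ hκ hε₀pos hε₀1 hκε
  refine ⟨max C 1, by positivity, 1 / ε₀, fun t ht => ?_⟩
  have hab : 1 / t ≤ ε₀ := (one_div_le hε₀pos ((one_div_pos.2 hε₀pos).trans_le ht)).1 ht
  rw [integral_Icc_eq_integral_Ioc, ← intervalIntegral.integral_of_le hab]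
  refine le_trans (le_of_eq ?_) ((hC t ht).trans (le_max_left _ _))
  congr 2
  funext r
  rw [hf, amplitude, phase, phaseSq]
  ring

theorem stmt13 (δ θ μ κ : ℝ) (hδ : 0 < δ) (hθ : 0 < θ) (hθ2 : θ ≤ 2)
    (hμ : 0 ≤ μ) (hκ : 0 < κ)
    (ε₀ : ℝ) (hε₀ : ε₀ = min ((κ / (2 * (μ + κ) * δ * θ)) ^ (1 / (2 * θ))) 1)
    (f : ℝ → ℝ)
    (hf : ∀ r : ℝ, f r = Real.sqrt ((μ * r ^ 4 + κ * r ^ 2) / (1 + δ * r ^ (2 * θ)))) :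
    ∃ C : ℝ, 0 < C ∧ ∃ T : ℝ, ∀ t ≥ T,
      |∫ r in Set.Icc (1 / t) ε₀,
          Real.exp (-r ^ 2) * Real.cos (2 * t * f r) * (1 + δ * r ^ (2 * θ)) / (μ * r ^ 3 + κ * r)|
        ≤ C :=
  stmt13_general δ θ μ κ hδ hθ hμ hκ ε₀ hε₀ f hf
end
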